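/- arXiv:2503.05468 — 3 statements merged into one kernel-verified Lean document; each statement's English description precedes it below -/
import Mathlib

section
/- Let μ be a p×p matrix of locally finite measures on [0,∞) whose matrix of atoms at 0, μ(0) = (μ^{i,j}({0}))_{i,j}, has spectral radius strictly less than 1. Then the Markov renewal function U(t) = Σ_{n≥0} μ^{*n}([0,t]) has all entries finite for every t ≥ 0. -/
open MeasureTheory Filter Topology

noncomputable section

/-- The spectral radius of a complex `p × p` matrix: the supremum of the absolute values
of its eigenvalues. -/
def specRad (p : ℕ) (A : Matrix (Fin p) (Fin p) ℂ) : ℝ :=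
  sSup ((fun z => ‖z‖) '' spectrum ℂ A)

/-- The matrix of atoms at `0`, `μ(0) = (μ^{i,j}({0}))_{i,j}`, viewed as a complex matrix. -/
def atomMat {p : ℕ} (μ : Fin p → Fin p → Measure ℝ) : Matrix (Fin p) (Fin p) ℂ :=
  Matrix.of fun i j => ((μ i j {0}).toReal : ℂ)

/-- The Laplace transform `Lμ(z)` of a matrix of measures. -/
def lapT {p : ℕ} (μ : Fin p → Fin p → Measure ℝ) (z : ℂ) : Matrix (Fin p) (Fin p) ℂ :=
  Matrix.of fun i j => ∫ x, Complex.exp (-z * x) ∂(μ i j)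

/-- The domain `D(Lμ)` of the Laplace transform. -/
def LTdom {p : ℕ} (μ : Fin p → Fin p → Measure ℝ) : Set ℂ :=
  {z | ∀ i j, Integrable (fun x => Real.exp (-z.re * x)) (μ i j)}

/-- Matrix convolution of two matrices of measures:
`(μ*ν)^{i,j} = Σ_k μ^{i,k} * ν^{k,j}`. -/
def mconv {p : ℕ} (μ ν : Fin p → Fin p → Measure ℝ) : Fin p → Fin p → Measure ℝ :=
  fun i j => ∑ k, (μ i k).conv (ν k j)

/-- Matrix convolution powers: `μ^{*0} = I_p δ_0`, `μ^{*(n+1)} = μ * μ^{*n}`. -/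
def mconvPow {p : ℕ} (μ : Fin p → Fin p → Measure ℝ) : ℕ → Fin p → Fin p → Measure ℝ
  | 0 => fun i j => if i = j then Measure.dirac 0 else 0
  | n + 1 => mconv μ (mconvPow μ n)

/-- The Markov renewal measure `U = Σ_{n ≥ 0} μ^{*n}`. -/
def renewal {p : ℕ} (μ : Fin p → Fin p → Measure ℝ) : Fin p → Fin p → Measure ℝ :=
  fun i j => Measure.sum fun n => mconvPow μ n i j

/-- `Λ = {z ∈ D(Lμ) : det(I_p - Lμ(z)) = 0}`. -/
def LambdaSet {p : ℕ} (μ : Fin p → Fin p → Measure ℝ) : Set ℂ :=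
  {z ∈ LTdom μ | Matrix.det (1 - lapT μ z) = 0}

/-!
For `s ≥ 0` the weight `g_s(x) = e^{-s x} 1_{[0,t]}(x)` is submultiplicative on `[0, ∞)`, so
`∫ g_s dμ^{*n} ≤ L_sⁿ` entrywise, where `L_s = (∫ g_s dμ^{i,j})_{i,j}`, while
`μ^{*n}([0,t]) ≤ e^{s t} ∫ g_s dμ^{*n}`. Hence `U(t) ≤ e^{s t} Σₙ L_sⁿ`, and it suffices to find `s`
with `ρ(L_s) < 1`. As `s → ∞`, `L_s → μ(0)` by dominated convergence, and by Gelfand's formula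
`ρ(a) < 1` is an open condition (`ρ(a) < 1` iff `‖aⁿ‖ < 1` for some `n ≥ 1`).
-/

open scoped NNReal ENNReal

section BanachAlgebra

variable {A : Type*} [NormedRing A] [NormedAlgebra ℂ A] [CompleteSpace A]

theorem eventually_nnnorm_pow_lt_pow_of_spectralRadius_lt {a : A} {r : ℝ≥0}
    (h : spectralRadius ℂ a < r) : ∀ᶠ n : ℕ in atTop, ‖a ^ n‖₊ < r ^ n := by
  have hgelfand := spectrum.pow_nnnorm_pow_one_div_tendsto_nhds_spectralRadius a
  filter_upwards [hgelfand.eventually_lt_const h, eventually_ne_atTop 0] with n hroot hn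
  have hpow := ENNReal.pow_lt_pow_left hn hroot
  rwa [one_div, ENNReal.rpow_inv_natCast_pow hn, ← ENNReal.coe_pow, ENNReal.coe_lt_coe] at hpow

theorem summable_norm_pow_of_spectralRadius_lt_one {a : A} (h : spectralRadius ℂ a < 1) :
    Summable fun n : ℕ => ‖a ^ n‖ := by
  obtain ⟨r, hρr, hr1⟩ := ENNReal.lt_iff_exists_nnreal_btwn.1 h
  refine .of_norm_bounded_eventually_nat (g := fun n => (r : ℝ) ^ n)
    (summable_geometric_of_lt_one r.coe_nonneg (mod_cast hr1)) ?_
  filter_upwards [eventually_nnnorm_pow_lt_pow_of_spectralRadius_lt hρr] with n hn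
  rw [norm_norm]
  exact_mod_cast hn.le

theorem spectralRadius_lt_one_of_nnnorm_pow_lt_one [NormOneClass A] {a : A} {n : ℕ}
    (h : ‖a ^ (n + 1)‖₊ < 1) : spectralRadius ℂ a < 1 := by
  refine (spectrum.spectralRadius_le_pow_nnnorm_pow_one_div ℂ a n).trans_lt ?_
  rw [nnnorm_one, ENNReal.coe_one, ENNReal.one_rpow, mul_one]
  exact ENNReal.rpow_lt_one (mod_cast h) (by positivity)

theorem Filter.Tendsto.eventually_spectralRadius_lt_one [NormOneClass A] {ι : Type*}
    {l : Filter ι} {f : ι → A} {a : A} (hf : Tendsto f l (𝓝 a)) (ha : spectralRadius ℂ a < 1) :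
    ∀ᶠ x in l, spectralRadius ℂ (f x) < 1 := by
  obtain ⟨n, hn⟩ := ((eventually_nnnorm_pow_lt_pow_of_spectralRadius_lt
    (r := 1) (mod_cast ha)).and (eventually_ne_atTop 0)).exists
  obtain ⟨k, rfl⟩ := Nat.exists_eq_succ_of_ne_zero hn.2
  have hpow : Tendsto (fun x => f x ^ (k + 1)) l (𝓝 (a ^ (k + 1))) := hf.pow (k + 1)
  filter_upwards [hpow.nnnorm.eventually_lt_const (by simpa using hn.1)] with x hx
  exact spectralRadius_lt_one_of_nnnorm_pow_lt_one hx

end BanachAlgebra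

attribute [local instance] Matrix.linftyOpSeminormedAddCommGroup
  Matrix.linftyOpNormedAddCommGroup Matrix.linftyOpNormedRing Matrix.linftyOpNormedAlgebra

theorem Matrix.nnnorm_apply_le_linfty_opNNNorm {m n α : Type*} [Fintype m] [Fintype n]
    [SeminormedAddCommGroup α] (A : Matrix m n α) (i : m) (j : n) : ‖A i j‖₊ ≤ ‖A‖₊ := by
  rw [Matrix.linfty_opNNNorm_def]
  exact (Finset.single_le_sum (fun _ _ => zero_le) (Finset.mem_univ j)).trans
    (Finset.le_sup (f := fun i => ∑ j, ‖A i j‖₊) (Finset.mem_univ i))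

theorem spectralRadius_le_ofReal_specRad {p : ℕ} (A : Matrix (Fin p) (Fin p) ℂ) :
    spectralRadius ℂ A ≤ ENNReal.ofReal (specRad p A) := by
  have hbdd : BddAbove ((fun z : ℂ => ‖z‖) '' spectrum ℂ A) :=
    ((spectrum.isCompact A).image continuous_norm).bddAbove
  refine iSup₂_le fun z hz => ?_
  rw [← ENNReal.ofReal_coe_nnreal, coe_nnnorm]
  exact ENNReal.ofReal_le_ofReal (le_csSup hbdd ⟨z, hz, rfl⟩)

theorem Matrix.tsum_pow_apply_ne_top_of_spectralRadius_lt_one {ι : Type*} [Fintype ι]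
    [DecidableEq ι] {M : Matrix ι ι ℝ≥0∞} (hM : ∀ i j, M i j ≠ ∞)
    (h : spectralRadius ℂ (M.map fun x => (x.toReal : ℂ)) < 1) (i j : ι) :
    ∑' n, (M ^ n) i j ≠ ∞ := by
  set B : Matrix ι ι ℝ≥0 := M.map ENNReal.toNNReal
  set φ : ℝ≥0 →+* ℂ := Complex.ofRealHom.comp NNReal.toRealHom
  have hMB : M = B.map ENNReal.ofNNRealHom := by
    ext a b
    exact (ENNReal.coe_toNNReal (hM a b)).symm
  replace h : spectralRadius ℂ (B.map φ) < 1 := h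
  have hpow (n : ℕ) : (M ^ n) i j = ((B ^ n) i j : ℝ≥0∞) := by
    rw [hMB, ← Matrix.map_pow]
    rfl
  simp_rw [hpow]
  rw [ENNReal.tsum_coe_ne_top_iff_summable, ← NNReal.summable_coe]
  refine .of_nonneg_of_le (fun _ => NNReal.coe_nonneg _) (fun n => ?_)
    (summable_norm_pow_of_spectralRadius_lt_one h)
  calc (((B ^ n) i j : ℝ≥0) : ℝ) = ‖((B.map φ) ^ n) i j‖ := by
        rw [← Matrix.map_pow]
        simp [φ]
    _ ≤ ‖(B.map φ) ^ n‖ := Matrix.nnnorm_apply_le_linfty_opNNNorm _ i j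

theorem MeasureTheory.Measure.conv_Iio_zero_eq_zero {κ ν : Measure ℝ} [SFinite ν]
    (hκ : κ (Set.Iio 0) = 0) (hν : ν (Set.Iio 0) = 0) : (κ ∗ ν) (Set.Iio 0) = 0 := by
  rw [Measure.conv, Measure.map_apply (by fun_prop) measurableSet_Iio]
  have hsub : (fun q : ℝ × ℝ => q.1 + q.2) ⁻¹' Set.Iio 0 ⊆
      Set.Iio 0 ×ˢ Set.univ ∪ Set.univ ×ˢ Set.Iio 0 := by
    rintro ⟨x, y⟩ (h : x + y < 0)
    by_contra! hc
    simp only [Set.mem_union, Set.mem_prod, Set.mem_Iio, Set.mem_univ, and_true, true_and,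
      not_or, not_lt] at hc
    linarith
  refine measure_mono_null hsub (measure_union_null ?_ ?_)
  · rw [Measure.prod_prod, hκ, zero_mul]
  · rw [Measure.prod_prod, hν, mul_zero]

theorem MeasureTheory.ae_nonneg_of_measure_Iio_eq_zero {κ : Measure ℝ}
    (hκ : κ (Set.Iio 0) = 0) : ∀ᵐ x ∂κ, 0 ≤ x :=
  measure_mono_null (fun x (hx : ¬0 ≤ x) => not_le.1 hx) hκ

theorem MeasureTheory.lintegral_conv_le_mul {f : ℝ → ℝ≥0∞} (hf : Measurable f)
    (hmul : ∀ x y, 0 ≤ x → 0 ≤ y → f (x + y) ≤ f x * f y) {κ ν : Measure ℝ} [SFinite ν]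
    (hκ : κ (Set.Iio 0) = 0) (hν : ν (Set.Iio 0) = 0) :
    ∫⁻ x, f x ∂(κ ∗ ν) ≤ (∫⁻ x, f x ∂κ) * ∫⁻ x, f x ∂ν := by
  rw [Measure.lintegral_conv hf]
  calc ∫⁻ x, ∫⁻ y, f (x + y) ∂ν ∂κ
      ≤ ∫⁻ x, f x * ∫⁻ y, f y ∂ν ∂κ := by
        refine lintegral_mono_ae ((ae_nonneg_of_measure_Iio_eq_zero hκ).mono fun x hx => ?_)
        rw [← lintegral_const_mul _ hf]
        exact lintegral_mono_ae
          ((ae_nonneg_of_measure_Iio_eq_zero hν).mono fun y hy => hmul x y hx hy)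
    _ = (∫⁻ x, f x ∂κ) * ∫⁻ y, f y ∂ν := lintegral_mul_const _ hf

section MatrixConvolution

variable {p : ℕ} (μ : Fin p → Fin p → Measure ℝ) [∀ i j, SFinite (μ i j)]

instance mconvPow.instSFinite (n : ℕ) (i j : Fin p) : SFinite (mconvPow μ n i j) := by
  induction n generalizing i j with
  | zero => unfold mconvPow; split_ifs <;> infer_instance
  | succ n ih =>
    simp only [mconvPow, mconv]
    rw [← Measure.sum_fintype]
    infer_instance

variable {μ}

theorem mconvPow_apply_Iio_zero (hsupp : ∀ i j, μ i j (Set.Iio 0) = 0) (n : ℕ) (i j : Fin p) :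
    mconvPow μ n i j (Set.Iio 0) = 0 := by
  induction n generalizing i j with
  | zero => simp only [mconvPow]; split_ifs <;> simp
  | succ n ih =>
    simp only [mconvPow, mconv, Measure.coe_finsetSum, Finset.sum_apply]
    exact Finset.sum_eq_zero fun k _ => Measure.conv_Iio_zero_eq_zero (hsupp i k) (ih k j)

theorem lintegral_mconvPow_le {f : ℝ → ℝ≥0∞} (hf : Measurable f) (hf0 : f 0 ≤ 1)
    (hmul : ∀ x y, 0 ≤ x → 0 ≤ y → f (x + y) ≤ f x * f y)
    (hsupp : ∀ i j, μ i j (Set.Iio 0) = 0) (n : ℕ) (i j : Fin p) :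
    ∫⁻ x, f x ∂(mconvPow μ n i j) ≤ ((Matrix.of fun i j => ∫⁻ x, f x ∂(μ i j)) ^ n) i j := by
  induction n generalizing i j with
  | zero =>
    simp only [mconvPow, pow_zero, Matrix.one_apply]
    split_ifs
    · rwa [lintegral_dirac' _ hf]
    · simp
  | succ n ih =>
    simp only [mconvPow, mconv, lintegral_finsetSum_measure, pow_succ', Matrix.mul_apply]
    gcongr with k
    exact (lintegral_conv_le_mul hf hmul (hsupp i k) (mconvPow_apply_Iio_zero hsupp n k j)).trans
      (mul_le_mul_right (ih k j) _)

end MatrixConvolution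

def truncExpWeight (s t : ℝ) : ℝ → ℝ≥0∞ :=
  (Set.Icc 0 t).indicator fun x => ENNReal.ofReal (Real.exp (-s * x))

section TruncExpWeight

variable {s t : ℝ}

@[fun_prop]
theorem measurable_truncExpWeight : Measurable (truncExpWeight s t) :=
  (Measurable.ennreal_ofReal (by fun_prop)).indicator measurableSet_Icc

theorem truncExpWeight_zero (ht : 0 ≤ t) : truncExpWeight s t 0 = 1 := by
  simp [truncExpWeight, ht]

theorem truncExpWeight_le_indicator_one (hs : 0 ≤ s) (x : ℝ) :
    truncExpWeight s t x ≤ (Set.Icc 0 t).indicator 1 x := by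
  unfold truncExpWeight
  by_cases hx : x ∈ Set.Icc 0 t
  · simp only [Set.indicator_of_mem hx, Pi.one_apply]
    exact ENNReal.ofReal_le_one.2 (Real.exp_le_one_iff.2 (by nlinarith [hx.1]))
  · simp [hx]

theorem truncExpWeight_add_le {x y : ℝ} (hx : 0 ≤ x) (hy : 0 ≤ y) :
    truncExpWeight s t (x + y) ≤ truncExpWeight s t x * truncExpWeight s t y := by
  unfold truncExpWeight
  by_cases h : x + y ∈ Set.Icc 0 t
  · rw [Set.indicator_of_mem h, Set.indicator_of_mem (show x ∈ Set.Icc 0 t by grind),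
      Set.indicator_of_mem (show y ∈ Set.Icc 0 t by grind),
      ← ENNReal.ofReal_mul (Real.exp_nonneg _), ← Real.exp_add, mul_add, neg_mul, neg_mul]
  · simp [h]

theorem lintegral_truncExpWeight_le (hs : 0 ≤ s) (κ : Measure ℝ) :
    ∫⁻ x, truncExpWeight s t x ∂κ ≤ κ (Set.Icc 0 t) :=
  (lintegral_mono (truncExpWeight_le_indicator_one hs)).trans_eq
    (lintegral_indicator_one measurableSet_Icc)

theorem measure_Icc_le_exp_mul_lintegral_truncExpWeight (hs : 0 ≤ s) (κ : Measure ℝ) :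
    κ (Set.Icc 0 t) ≤ ENNReal.ofReal (Real.exp (s * t)) * ∫⁻ x, truncExpWeight s t x ∂κ := by
  rw [truncExpWeight, lintegral_indicator measurableSet_Icc, ← setLIntegral_one,
    ← lintegral_const_mul' _ _ ENNReal.ofReal_ne_top]
  refine setLIntegral_mono (by fun_prop) fun x hx => ?_
  rw [← ENNReal.ofReal_mul (Real.exp_nonneg _), ← Real.exp_add]
  exact ENNReal.one_le_ofReal.2 (Real.one_le_exp (by nlinarith [hx.2]))

theorem tendsto_lintegral_truncExpWeight (ht : 0 ≤ t) (κ : Measure ℝ) [IsLocallyFiniteMeasure κ]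
    (hκ : κ (Set.Iio 0) = 0) :
    Tendsto (fun n : ℕ => ∫⁻ x, truncExpWeight n t x ∂κ) atTop (𝓝 (κ {0})) := by
  rw [← lintegral_indicator_one (measurableSet_singleton 0)]
  refine tendsto_lintegral_of_dominated_convergence ((Set.Icc 0 t).indicator 1)
    (fun _ => measurable_truncExpWeight)
    (fun n => .of_forall (truncExpWeight_le_indicator_one n.cast_nonneg)) ?_ ?_
  · rw [lintegral_indicator_one measurableSet_Icc]
    exact isCompact_Icc.measure_lt_top.ne
  · refine (ae_nonneg_of_measure_Iio_eq_zero hκ).mono fun x hx => ?_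
    rcases hx.eq_or_lt with rfl | hpos
    · simp [truncExpWeight_zero ht]
    · rw [Set.indicator_of_notMem (show x ∉ ({0} : Set ℝ) from hpos.ne')]
      refine tendsto_of_tendsto_of_tendsto_of_le_of_le tendsto_const_nhds ?_ (fun _ => zero_le)
        fun n => Set.indicator_le_self _ _ x
      have hexp : Tendsto (fun n : ℕ => Real.exp (-n * x)) atTop (𝓝 0) := by
        simp_rw [neg_mul]
        exact Real.tendsto_exp_atBot.comp
          (tendsto_neg_atTop_atBot.comp (tendsto_natCast_atTop_atTop.atTop_mul_const hpos))
      simpa using ENNReal.tendsto_ofReal hexp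

end TruncExpWeight

def truncLaplace {p : ℕ} (μ : Fin p → Fin p → Measure ℝ) (s t : ℝ) :
    Matrix (Fin p) (Fin p) ℝ≥0∞ :=
  Matrix.of fun i j => ∫⁻ x, truncExpWeight s t x ∂(μ i j)

section Renewal

variable {p : ℕ} {μ : Fin p → Fin p → Measure ℝ} {s t : ℝ}

theorem renewal_apply_Icc_le [∀ i j, SFinite (μ i j)] (hsupp : ∀ i j, μ i j (Set.Iio 0) = 0)
    (hs : 0 ≤ s) (ht : 0 ≤ t) (i j : Fin p) :
    renewal μ i j (Set.Icc 0 t) ≤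
      ENNReal.ofReal (Real.exp (s * t)) * ∑' n, (truncLaplace μ s t ^ n) i j := by
  rw [renewal, Measure.sum_apply _ measurableSet_Icc, ← ENNReal.tsum_mul_left]
  refine ENNReal.tsum_le_tsum fun n =>
    (measure_Icc_le_exp_mul_lintegral_truncExpWeight hs _).trans ?_
  gcongr
  exact lintegral_mconvPow_le measurable_truncExpWeight (truncExpWeight_zero ht).le
    (fun _ _ => truncExpWeight_add_le) hsupp n i j

theorem tendsto_truncLaplace_atomMat [∀ i j, IsLocallyFiniteMeasure (μ i j)]
    (hsupp : ∀ i j, μ i j (Set.Iio 0) = 0) (ht : 0 ≤ t) :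
    Tendsto (fun n : ℕ => (truncLaplace μ n t).map fun x => (x.toReal : ℂ)) atTop
      (𝓝 (atomMat μ)) := by
  refine tendsto_pi_nhds.2 fun i => tendsto_pi_nhds.2 fun j => ?_
  have hatom : μ i j {0} ≠ ∞ := (isCompact_singleton.measure_lt_top).ne
  exact (Complex.continuous_ofReal.tendsto _).comp
    ((ENNReal.tendsto_toReal hatom).comp (tendsto_lintegral_truncExpWeight ht _ (hsupp i j)))

end Renewal

/-- If the matrix of atoms at `0` of a `p×p` matrix of locally finite
measures on `[0,∞)` has spectral radius `< 1`, then the Markov renewal function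
`U(t) = Σ_{n≥0} μ^{*n}([0,t])` has all entries finite for every `t ≥ 0`. -/
theorem renewal_function_finite {p : ℕ} (μ : Fin p → Fin p → Measure ℝ)
    (hloc : ∀ i j, IsLocallyFiniteMeasure (μ i j))
    (hsupp : ∀ i j, μ i j (Set.Iio 0) = 0)
    (hA2 : specRad p (atomMat μ) < 1) :
    ∀ t : ℝ, 0 ≤ t → ∀ i j, renewal μ i j (Set.Icc 0 t) < ⊤ := by
  intro t ht i j
  have : Nonempty (Fin p) := ⟨i⟩
  have hatom : spectralRadius ℂ (atomMat μ) < 1 :=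
    (spectralRadius_le_ofReal_specRad _).trans_lt (ENNReal.ofReal_lt_one.2 hA2)
  obtain ⟨n, hn⟩ :=
    ((tendsto_truncLaplace_atomMat hsupp ht).eventually_spectralRadius_lt_one hatom).exists
  have hfin (a b : Fin p) : truncLaplace μ n t a b ≠ ∞ :=
    ((lintegral_truncExpWeight_le n.cast_nonneg _).trans_lt isCompact_Icc.measure_lt_top).ne
  calc renewal μ i j (Set.Icc 0 t)
      ≤ ENNReal.ofReal (Real.exp (n * t)) * ∑' k, (truncLaplace μ n t ^ k) i j :=
        renewal_apply_Icc_le hsupp n.cast_nonneg ht i j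
    _ < ⊤ := ENNReal.mul_lt_top ENNReal.ofReal_lt_top
        (Matrix.tsum_pow_apply_ne_top_of_spectralRadius_lt_one hfin hn i j).lt_top
end
end

section
/- Let μ be a p×p matrix of locally finite measures on [0,∞) satisfying (A1), (A2) and (A3). Then there exists a real number α ∈ Λ with ρ(Lμ(α)) = 1 (a Malthusian parameter), and every λ ∈ Λ satisfies Re(λ) ≤ α. -/
open MeasureTheory Filter Topology

noncomputable section

/-!
For real `θ ≥ θ₀` the matrix `Lμ(θ)` is entrywise nonnegative, entrywise nonincreasing in `θ`,
continuous in `θ` by dominated convergence, and tends to `μ(0)` as `θ → ∞`. On nonnegative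
matrices the spectral radius is monotone (by Gelfand's formula), upper semicontinuous, and lower
semicontinuous: taking absolute values in an eigenvector for an eigenvalue of maximal modulus gives
a subinvariant vector, and subinvariant vectors bound `ρ` from below. So `θ ↦ ρ(Lμ(θ))` is
continuous and nonincreasing on `[θ₀, ∞)`, at least `1` at `θ₀` and below `1` for large `θ`, and
`α` is the largest `θ` with `ρ(Lμ(θ)) ≥ 1`; there `ρ(Lμ(α)) = 1`. The weak Perron–Frobenius
theorem turns this into `det(I - Lμ(α)) = 0`. For `λ ∈ Λ`, `1` is an eigenvalue of `Lμ(λ)` and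
`|Lμ(λ)| ≤ Lμ(Re λ)` entrywise, so `ρ(Lμ(Re λ)) ≥ 1` and `Re λ ≤ α`.
-/

open scoped Matrix Matrix.Norms.Operator

section RealMatrix

variable {m n : Type*}

theorem norm_map_ofReal [Fintype m] [Fintype n] (B : Matrix m n ℝ) :
    ‖B.map ((↑) : ℝ → ℂ)‖ = ‖B‖ := by
  simp [Matrix.linfty_opNorm_def]

theorem norm_le_norm_of_norm_apply_le [Fintype m] [Fintype n] {α β : Type*}
    [SeminormedAddCommGroup α] [SeminormedAddCommGroup β] {A : Matrix m n α} {B : Matrix m n β}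
    (h : ∀ i j, ‖A i j‖ ≤ ‖B i j‖) : ‖A‖ ≤ ‖B‖ := by
  simp only [Matrix.linfty_opNorm_def, NNReal.coe_le_coe]
  exact Finset.sup_mono_fun fun i _ => Finset.sum_le_sum fun j _ => h i j

theorem norm_pow_apply_le_pow_apply [Fintype n] [DecidableEq n] {A : Matrix n n ℂ}
    {B : Matrix n n ℝ} (h : ∀ i j, ‖A i j‖ ≤ B i j) (k : ℕ) (i j : n) :
    ‖(A ^ k) i j‖ ≤ (B ^ k) i j := by
  induction k generalizing j with
  | zero => by_cases hij : i = j <;> simp [hij]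
  | succ k ih =>
    simp only [pow_succ, Matrix.mul_apply]
    refine (norm_sum_le _ _).trans (Finset.sum_le_sum fun l _ => ?_)
    rw [norm_mul]
    exact mul_le_mul (ih l) (h l j) (norm_nonneg _) ((norm_nonneg _).trans (ih l))

theorem mulVec_mono_of_nonneg [Fintype n] {B : Matrix m n ℝ} (hB : ∀ i j, 0 ≤ B i j) {x y : n → ℝ}
    (hxy : x ≤ y) : B *ᵥ x ≤ B *ᵥ y :=
  fun i => Finset.sum_le_sum fun j _ => mul_le_mul_of_nonneg_left (hxy j) (hB i j)

theorem map_ofReal_pow [Fintype n] [DecidableEq n] (B : Matrix n n ℝ) (k : ℕ) :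
    (B ^ k).map ((↑) : ℝ → ℂ) = B.map (↑) ^ k :=
  Matrix.map_pow B Complex.ofRealHom k

theorem map_ofReal_smul (B : Matrix m n ℝ) (s : ℝ) :
    (s • B).map ((↑) : ℝ → ℂ) = (s : ℂ) • B.map (↑) := by
  ext; simp

end RealMatrix

section SpectralRadius

variable {p : ℕ}

theorem norm_le_specRad {A : Matrix (Fin p) (Fin p) ℂ} {z : ℂ} (hz : z ∈ spectrum ℂ A) :
    ‖z‖ ≤ specRad p A :=
  le_csSup ((spectrum.isCompact A).image continuous_norm).bddAbove ⟨z, hz, rfl⟩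

theorem specRad_le {A : Matrix (Fin p) (Fin p) ℂ} {c : ℝ} (hc : 0 ≤ c)
    (h : ∀ z ∈ spectrum ℂ A, ‖z‖ ≤ c) : specRad p A ≤ c :=
  Real.sSup_le (by rintro _ ⟨z, hz, rfl⟩; exact h z hz) hc

theorem specRad_nonneg (A : Matrix (Fin p) (Fin p) ℂ) : 0 ≤ specRad p A :=
  Real.sSup_nonneg (by rintro _ ⟨z, -, rfl⟩; exact norm_nonneg z)

theorem neZero_of_specRad_pos {A : Matrix (Fin p) (Fin p) ℂ} (h : 0 < specRad p A) : NeZero p :=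
  ⟨by rintro rfl; simp [specRad, spectrum.of_subsingleton] at h⟩

theorem exists_norm_eq_specRad {A : Matrix (Fin p) (Fin p) ℂ} (h : (spectrum ℂ A).Nonempty) :
    ∃ z ∈ spectrum ℂ A, ‖z‖ = specRad p A :=
  ((spectrum.isCompact A).image continuous_norm).sSup_mem (h.image _)

theorem spectralRadius_eq_ofReal_specRad (A : Matrix (Fin p) (Fin p) ℂ) :
    spectralRadius ℂ A = ENNReal.ofReal (specRad p A) := by
  refine le_antisymm (iSup₂_le fun z hz => ?_) ?_
  · rw [← enorm_eq_nnnorm, ← ofReal_norm]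
    exact ENNReal.ofReal_le_ofReal (norm_le_specRad hz)
  · rcases (spectrum ℂ A).eq_empty_or_nonempty with h | h
    · simp [specRad, h]
    · obtain ⟨z, hz, hzA⟩ := exists_norm_eq_specRad h
      rw [← hzA, ofReal_norm]
      exact le_iSup₂ (f := fun z _ => ‖z‖ₑ) z hz

theorem tendsto_norm_pow_rpow_specRad (A : Matrix (Fin p) (Fin p) ℂ) :
    Tendsto (fun n : ℕ => ‖A ^ n‖ ^ (1 / n : ℝ)) atTop (𝓝 (specRad p A)) := by
  have h := (ENNReal.tendsto_toReal ENNReal.ofReal_ne_top).comp <|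
    spectralRadius_eq_ofReal_specRad A ▸
      spectrum.pow_norm_pow_one_div_tendsto_nhds_spectralRadius A
  simpa [Function.comp_def, ENNReal.toReal_ofReal, Real.rpow_nonneg, specRad_nonneg] using h

theorem norm_pow_le_norm_pow {A : Matrix (Fin p) (Fin p) ℂ} {z : ℂ} (hz : z ∈ spectrum ℂ A)
    (n : ℕ) : ‖z‖ ^ n ≤ ‖A ^ n‖ := by
  have : NeZero p := ⟨by rintro rfl; simp [spectrum.of_subsingleton] at hz⟩
  simpa using spectrum.norm_le_norm_of_mem (spectrum.pow_mem_pow A n hz)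

theorem specRad_le_norm_pow_rpow (A : Matrix (Fin p) (Fin p) ℂ) {n : ℕ} (hn : n ≠ 0) :
    specRad p A ≤ ‖A ^ n‖ ^ (1 / n : ℝ) := by
  refine specRad_le (by positivity) fun z hz => ?_
  calc ‖z‖ = (‖z‖ ^ n) ^ (1 / n : ℝ) := by
        rw [one_div, Real.pow_rpow_inv_natCast (norm_nonneg z) hn]
    _ ≤ ‖A ^ n‖ ^ (1 / n : ℝ) := by gcongr; exact norm_pow_le_norm_pow hz n

theorem upperSemicontinuous_specRad : UpperSemicontinuous (specRad p) := by
  intro A y hy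
  obtain ⟨n, hn, hn0⟩ := ((tendsto_norm_pow_rpow_specRad A).eventually_lt_const hy).and
    (eventually_ne_atTop 0) |>.exists
  have hcont : Continuous fun B : Matrix (Fin p) (Fin p) ℂ => ‖B ^ n‖ ^ (1 / n : ℝ) :=
    (continuous_pow n).norm.rpow_const fun _ => Or.inr (by positivity)
  filter_upwards [hcont.continuousAt.eventually_lt continuousAt_const hn] with B hB
  exact (specRad_le_norm_pow_rpow B hn0).trans_lt hB

theorem specRad_smul (A : Matrix (Fin p) (Fin p) ℂ) {s : ℝ} (hs : 0 ≤ s) :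
    specRad p ((s : ℂ) • A) = s * specRad p A := by
  refine tendsto_nhds_unique (tendsto_norm_pow_rpow_specRad _)
    (((tendsto_norm_pow_rpow_specRad A).const_mul s).congr' ?_)
  filter_upwards [eventually_ne_atTop 0] with n hn
  rw [smul_pow, norm_smul, norm_pow (s : ℂ), Complex.norm_real, Real.norm_of_nonneg hs,
    Real.mul_rpow (by positivity) (norm_nonneg _), one_div,
    Real.pow_rpow_inv_natCast hs hn]

theorem eventually_norm_pow_le_pow (A : Matrix (Fin p) (Fin p) ℂ) {q : ℝ} (h : specRad p A < q) :
    ∀ᶠ n in atTop, ‖A ^ n‖ ≤ q ^ n := by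
  filter_upwards [(tendsto_norm_pow_rpow_specRad A).eventually_lt_const h,
    eventually_ne_atTop 0] with n hn hn0
  have hq : 0 ≤ q := (Real.rpow_nonneg (norm_nonneg _) _).trans hn.le
  calc ‖A ^ n‖ = (‖A ^ n‖ ^ (1 / n : ℝ)) ^ n := by
        rw [one_div, Real.rpow_inv_natCast_pow (norm_nonneg _) hn0]
    _ ≤ q ^ n := by gcongr

theorem exists_mulVec_eq_smul_of_mem_spectrum {A : Matrix (Fin p) (Fin p) ℂ} {z : ℂ}
    (hz : z ∈ spectrum ℂ A) : ∃ v ≠ 0, A *ᵥ v = z • v := by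
  rw [spectrum.mem_iff, Algebra.algebraMap_eq_smul_one, Matrix.isUnit_iff_isUnit_det,
    isUnit_iff_ne_zero, not_not] at hz
  obtain ⟨v, hv0, hv⟩ := Matrix.exists_mulVec_eq_zero_iff.2 hz
  rw [Matrix.sub_mulVec, Matrix.smul_mulVec, Matrix.one_mulVec, sub_eq_zero] at hv
  exact ⟨v, hv0, hv.symm⟩

theorem specRad_le_specRad_of_norm_le {A : Matrix (Fin p) (Fin p) ℂ}
    {B : Matrix (Fin p) (Fin p) ℝ} (h : ∀ i j, ‖A i j‖ ≤ B i j) :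
    specRad p A ≤ specRad p (B.map (↑)) := by
  refine le_of_tendsto_of_tendsto' (tendsto_norm_pow_rpow_specRad A)
    (tendsto_norm_pow_rpow_specRad _) fun k => ?_
  rw [← map_ofReal_pow, norm_map_ofReal]
  gcongr
  exact norm_le_norm_of_norm_apply_le fun i j =>
    (norm_pow_apply_le_pow_apply h k i j).trans (Real.le_norm_self _)

theorem summable_pow_of_specRad_lt_one {B : Matrix (Fin p) (Fin p) ℝ}
    (h : specRad p (B.map (↑)) < 1) : Summable (B ^ ·) := by
  obtain ⟨q, hBq, hq1⟩ := exists_between h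
  refine .of_norm_bounded_eventually_nat
    (summable_geometric_of_lt_one ((specRad_nonneg _).trans hBq.le) hq1) ?_
  filter_upwards [eventually_norm_pow_le_pow _ hBq] with k hk
  rwa [← map_ofReal_pow, norm_map_ofReal] at hk

theorem inv_one_sub_apply_nonneg {B : Matrix (Fin p) (Fin p) ℝ} (hB : ∀ i j, 0 ≤ B i j)
    (h : specRad p (B.map (↑)) < 1) (i j : Fin p) : 0 ≤ (1 - B)⁻¹ i j := by
  have hs := summable_pow_of_specRad_lt_one h
  rw [Matrix.inv_eq_right_inv hs.one_sub_mul_tsum_pow]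
  exact (Pi.hasSum.1 (Pi.hasSum.1 hs.hasSum i) j).nonneg fun k => Matrix.pow_apply_nonneg hB k i j

theorem tendsto_pow_atTop_nhds_zero_of_specRad_lt_one {B : Matrix (Fin p) (Fin p) ℝ}
    (h : specRad p (B.map (↑)) < 1) : Tendsto (B ^ ·) atTop (𝓝 0) :=
  (summable_pow_of_specRad_lt_one h).tendsto_atTop_zero

theorem le_specRad_of_smul_le_mulVec {B : Matrix (Fin p) (Fin p) ℝ} (hB : ∀ i j, 0 ≤ B i j)
    {x : Fin p → ℝ} (hx : 0 ≤ x) (hx0 : x ≠ 0) {c : ℝ} (h : c • x ≤ B *ᵥ x) :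
    c ≤ specRad p (B.map (↑)) := by
  rcases le_or_gt c 0 with hc | hc
  · exact hc.trans (specRad_nonneg _)
  by_contra! hlt
  have hρ : specRad p ((c⁻¹ • B).map (↑)) < 1 := by
    rw [map_ofReal_smul, specRad_smul _ (inv_nonneg.2 hc.le)]
    exact (inv_mul_lt_one₀ hc).2 hlt
  have hcB : ∀ i j, 0 ≤ (c⁻¹ • B) i j := fun i j => mul_nonneg (inv_nonneg.2 hc.le) (hB i j)
  have hstep : x ≤ (c⁻¹ • B) *ᵥ x := by
    rw [Matrix.smul_mulVec]
    calc x = c⁻¹ • (c • x) := (inv_smul_smul₀ hc.ne' x).symm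
      _ ≤ c⁻¹ • (B *ᵥ x) := smul_le_smul_of_nonneg_left h (inv_nonneg.2 hc.le)
  have hpow : ∀ k, x ≤ (c⁻¹ • B) ^ k *ᵥ x := by
    intro k
    induction k with
    | zero => simp
    | succ k ih =>
      rw [pow_succ, ← Matrix.mulVec_mulVec]
      exact ih.trans (mulVec_mono_of_nonneg (Matrix.pow_apply_nonneg hcB k) hstep)
  obtain ⟨i, hi⟩ : ∃ i, 0 < x i := by
    by_contra! hle
    exact hx0 (funext fun i => le_antisymm (hle i) (hx i))
  have hcont : Continuous fun C : Matrix (Fin p) (Fin p) ℝ => (C *ᵥ x) i :=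
    (continuous_apply i).comp (continuous_id.matrix_mulVec continuous_const)
  have hlim : Tendsto (fun k => ((c⁻¹ • B) ^ k *ᵥ x) i) atTop (𝓝 0) := by
    simpa [Function.comp_def] using
      (hcont.tendsto 0).comp (tendsto_pow_atTop_nhds_zero_of_specRad_lt_one hρ)
  exact absurd (ge_of_tendsto' hlim fun k => hpow k i) (not_le.2 hi)

theorem exists_nonneg_specRad_smul_le_mulVec [NeZero p] {B : Matrix (Fin p) (Fin p) ℝ}
    (hB : ∀ i j, 0 ≤ B i j) :
    ∃ x : Fin p → ℝ, 0 ≤ x ∧ x ≠ 0 ∧ specRad p (B.map (↑)) • x ≤ B *ᵥ x := by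
  obtain ⟨z, hz, hzρ⟩ := exists_norm_eq_specRad (spectrum.nonempty (B.map ((↑) : ℝ → ℂ)))
  obtain ⟨v, hv0, hv⟩ := exists_mulVec_eq_smul_of_mem_spectrum hz
  refine ⟨fun i => ‖v i‖, fun i => norm_nonneg _,
    fun h => hv0 (funext fun i => by simpa using congrFun h i), fun i => ?_⟩
  calc specRad p (B.map (↑)) * ‖v i‖ = ‖(B.map (↑) *ᵥ v) i‖ := by
        rw [hv, Pi.smul_apply, smul_eq_mul, norm_mul, hzρ]
    _ = ‖∑ j, (B i j : ℂ) * v j‖ := rfl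
    _ ≤ ∑ j, B i j * ‖v j‖ := by
      refine (norm_sum_le _ _).trans (le_of_eq (Finset.sum_congr rfl fun j _ => ?_))
      rw [norm_mul, Complex.norm_real, Real.norm_of_nonneg (hB i j)]

theorem lowerSemicontinuousOn_specRad_map_ofReal :
    LowerSemicontinuousOn (fun B : Matrix (Fin p) (Fin p) ℝ => specRad p (B.map (↑)))
      {B | ∀ i j, 0 ≤ B i j} := by
  intro B hB y hy
  rcases lt_or_ge y 0 with hy0 | hy0
  · exact .of_forall fun C => hy0.trans_le (specRad_nonneg _)
  have := neZero_of_specRad_pos (hy0.trans_lt hy)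
  obtain ⟨x, hx, hx0, hBx⟩ := exists_nonneg_specRad_smul_le_mulVec hB
  obtain ⟨c, hyc, hcρ⟩ := exists_between hy
  have hev : ∀ i, ∀ᶠ C in 𝓝[{B | ∀ i j, 0 ≤ B i j}] B, c * x i ≤ (C *ᵥ x) i := by
    intro i
    rcases (hx i).eq_or_lt with hxi | hxi
    · filter_upwards [self_mem_nhdsWithin] with C hC
      rw [← hxi, Pi.zero_apply, mul_zero]
      show 0 ≤ ∑ j, C i j * x j
      exact Finset.sum_nonneg fun j _ => mul_nonneg (hC i j) (hx j)
    · have hcont : Continuous fun C : Matrix (Fin p) (Fin p) ℝ => (C *ᵥ x) i :=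
        (continuous_apply i).comp (continuous_id.matrix_mulVec continuous_const)
      have hlt : c * x i < (B *ᵥ x) i := (mul_lt_mul_of_pos_right hcρ hxi).trans_le (hBx i)
      exact ((hcont.continuousAt.eventually_const_lt hlt).filter_mono nhdsWithin_le_nhds).mono
        fun _ => le_of_lt
  filter_upwards [eventually_all.2 hev, self_mem_nhdsWithin] with C hC hCnn
  exact hyc.trans_le (le_specRad_of_smul_le_mulVec hCnn hx hx0 hC)

theorem continuousOn_specRad_map_ofReal :
    ContinuousOn (fun B : Matrix (Fin p) (Fin p) ℝ => specRad p (B.map (↑)))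
      {B | ∀ i j, 0 ≤ B i j} :=
  continuousOn_iff_lower_upperSemicontinuousOn.2 ⟨lowerSemicontinuousOn_specRad_map_ofReal,
    (upperSemicontinuous_specRad.comp
      (continuous_id.matrix_map Complex.continuous_ofReal)).upperSemicontinuousOn _⟩

theorem det_one_sub_eq_zero_of_specRad_eq_one {B : Matrix (Fin p) (Fin p) ℝ}
    (hB : ∀ i j, 0 ≤ B i j) (h : specRad p (B.map (↑)) = 1) : (1 - B).det = 0 := by
  have := neZero_of_specRad_pos (h ▸ one_pos)
  -- `(1 - B)⁻¹` is a limit of the nonnegative Neumann sums `(1 - s • B)⁻¹`, `s ↑ 1`, yet it would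
  -- send the nonpositive vector `(1 - B) *ᵥ x` to the nonzero `x ≥ 0` given by `B *ᵥ x ≥ x`.
  by_contra hdet
  have hinv : ∀ i j, 0 ≤ (1 - B)⁻¹ i j := by
    intro i j
    have hcont : ContinuousAt (fun s : ℝ => (1 - s • B)⁻¹ i j) 1 :=
      (continuous_id.matrix_elem i j).continuousAt.comp <|
        (continuousAt_matrix_inv _ (NormedRing.inverse_continuousAt (Units.mk0 _ hdet))).comp_of_eq
          (by fun_prop) (by simp)
    refine ge_of_tendsto ((one_smul ℝ B ▸ hcont.tendsto).mono_left
      (nhdsWithin_le_nhds (s := Set.Iio 1))) ?_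
    filter_upwards [Ioo_mem_nhdsLT zero_lt_one] with s hs
    refine inv_one_sub_apply_nonneg (B := s • B) (fun i j => mul_nonneg hs.1.le (hB i j)) ?_ i j
    rw [map_ofReal_smul, specRad_smul _ hs.1.le, h, mul_one]
    exact hs.2
  obtain ⟨x, hx, hx0, hBx⟩ := exists_nonneg_specRad_smul_le_mulVec hB
  rw [h, one_smul] at hBx
  have hBx' : (1 - B) *ᵥ x ≤ 0 := by
    rw [Matrix.sub_mulVec, Matrix.one_mulVec]
    exact sub_nonpos.2 hBx
  have hxeq : x = (1 - B)⁻¹ *ᵥ ((1 - B) *ᵥ x) := by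
    rw [Matrix.mulVec_mulVec, Matrix.nonsing_inv_mul _ (isUnit_iff_ne_zero.2 hdet),
      Matrix.one_mulVec]
  refine hx0 (le_antisymm (fun i => ?_) hx)
  rw [hxeq]
  show ∑ j, (1 - B)⁻¹ i j * ((1 - B) *ᵥ x) j ≤ 0
  exact Finset.sum_nonpos fun j _ => mul_nonpos_of_nonneg_of_nonpos (hinv i j) (hBx' j)

end SpectralRadius

section LaplaceTransform

variable {ν : Measure ℝ}

theorem integrable_exp_neg_mul_of_le (hν : ∀ᵐ x ∂ν, 0 ≤ x) {θ θ' : ℝ}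
    (hθ : Integrable (fun x => Real.exp (-θ * x)) ν) (h : θ ≤ θ') :
    Integrable (fun x => Real.exp (-θ' * x)) ν :=
  hθ.mono' (by fun_prop) <| hν.mono fun x hx => by
    rw [Real.norm_of_nonneg (Real.exp_nonneg _)]
    exact Real.exp_le_exp.2 (by nlinarith)

theorem antitoneOn_integral_exp_neg_mul (hν : ∀ᵐ x ∂ν, 0 ≤ x) {θ₀ : ℝ}
    (hθ₀ : Integrable (fun x => Real.exp (-θ₀ * x)) ν) :
    AntitoneOn (fun θ => ∫ x, Real.exp (-θ * x) ∂ν) (Set.Ici θ₀) := fun a ha b hb hab =>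
  integral_mono_ae (integrable_exp_neg_mul_of_le hν hθ₀ hb)
    (integrable_exp_neg_mul_of_le hν hθ₀ ha)
    (hν.mono fun x hx => Real.exp_le_exp.2 (by nlinarith))

theorem continuousOn_integral_exp_neg_mul (hν : ∀ᵐ x ∂ν, 0 ≤ x) {θ₀ : ℝ}
    (hθ₀ : Integrable (fun x => Real.exp (-θ₀ * x)) ν) :
    ContinuousOn (fun θ => ∫ x, Real.exp (-θ * x) ∂ν) (Set.Ici θ₀) := by
  refine continuousOn_of_dominated (fun _ _ => by fun_prop) (fun θ hθ => ?_) hθ₀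
    (.of_forall fun x => by fun_prop)
  filter_upwards [hν] with x hx
  rw [Real.norm_of_nonneg (Real.exp_nonneg _)]
  exact Real.exp_le_exp.2 (by nlinarith [Set.mem_Ici.1 hθ])

theorem tendsto_integral_exp_neg_mul_atTop (hν : ∀ᵐ x ∂ν, 0 ≤ x) {θ₀ : ℝ}
    (hθ₀ : Integrable (fun x => Real.exp (-θ₀ * x)) ν) :
    Tendsto (fun θ => ∫ x, Real.exp (-θ * x) ∂ν) atTop (𝓝 (ν {0}).toReal) := by
  have hatom : (ν {0}).toReal = ∫ x, ({0} : Set ℝ).indicator 1 x ∂ν := by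
    rw [integral_indicator_one (measurableSet_singleton 0), measureReal_def]
  rw [hatom]
  refine tendsto_integral_filter_of_dominated_convergence _ (.of_forall fun θ => by fun_prop) ?_
    hθ₀ ?_
  · filter_upwards [eventually_ge_atTop θ₀] with θ hθ
    filter_upwards [hν] with x hx
    rw [Real.norm_of_nonneg (Real.exp_nonneg _)]
    exact Real.exp_le_exp.2 (by nlinarith)
  · filter_upwards [hν] with x hx
    rcases hx.eq_or_lt with rfl | hx
    · simp
    · rw [Set.indicator_of_notMem (Set.mem_singleton_iff.not.2 hx.ne')]
      exact Real.tendsto_exp_atBot.comp (tendsto_neg_atTop_atBot.atBot_mul_const hx)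

theorem norm_integral_cexp_neg_mul_le (z : ℂ) :
    ‖∫ x, Complex.exp (-z * x) ∂ν‖ ≤ ∫ x, Real.exp (-z.re * x) ∂ν :=
  (norm_integral_le_integral_norm _).trans_eq <|
    integral_congr_ae (.of_forall fun x => by simp [Complex.norm_exp])

end LaplaceTransform

theorem exists_eq_and_isGreatest_of_antitoneOn {f : ℝ → ℝ} {a b c : ℝ}
    (hf : ContinuousOn f (Set.Ici a)) (hanti : AntitoneOn f (Set.Ici a)) (ha : c ≤ f a)
    (hab : a ≤ b) (hb : f b < c) : ∃ α, f α = c ∧ IsGreatest {θ | a ≤ θ ∧ c ≤ f θ} α := by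
  have hK : IsCompact (Set.Icc a b ∩ f ⁻¹' Set.Ici c) :=
    isCompact_Icc.of_isClosed_subset
      ((hf.mono Set.Icc_subset_Ici_self).preimage_isClosed_of_isClosed isClosed_Icc isClosed_Ici)
      Set.inter_subset_left
  obtain ⟨α, ⟨⟨haα, hαb⟩, hα⟩, hαmax⟩ := hK.exists_isGreatest ⟨a, ⟨le_rfl, hab⟩, ha⟩
  have hupper : ∀ θ, a ≤ θ → c ≤ f θ → θ ≤ α := fun θ haθ hθ =>
    hαmax ⟨⟨haθ, not_lt.1 fun hbθ => (hanti hab haθ hbθ.le).not_gt (hb.trans_le hθ)⟩, hθ⟩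
  obtain ⟨θ, ⟨hαθ, hθb⟩, hθ⟩ := intermediate_value_Icc' hαb
    (hf.mono fun x hx => haα.trans hx.1) ⟨hb.le, hα⟩
  obtain rfl : θ = α := le_antisymm (hupper θ (haα.trans hαθ) hθ.ge) hαθ
  exact ⟨θ, hθ, ⟨haα, hα⟩, fun θ' hθ' => hupper θ' hθ'.1 hθ'.2⟩

section MatrixLaplaceTransform

variable {p : ℕ} {μ : Fin p → Fin p → Measure ℝ}

variable (μ) in
def realLapT (θ : ℝ) : Matrix (Fin p) (Fin p) ℝ :=
  Matrix.of fun i j => ∫ x, Real.exp (-θ * x) ∂μ i j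

theorem lapT_ofReal (θ : ℝ) : lapT μ θ = (realLapT μ θ).map (↑) := by
  ext i j
  rw [Matrix.map_apply, realLapT, Matrix.of_apply, ← integral_complex_ofReal]
  exact integral_congr_ae (.of_forall fun x => by push_cast [Complex.ofReal_exp]; rfl)

theorem realLapT_nonneg (θ : ℝ) (i j : Fin p) : 0 ≤ realLapT μ θ i j :=
  integral_nonneg fun _ => (Real.exp_pos _).le

theorem ofReal_mem_LTdom_of_le (hμ : ∀ i j, ∀ᵐ x ∂μ i j, 0 ≤ x) {θ₀ θ : ℝ}
    (hθ₀ : (θ₀ : ℂ) ∈ LTdom μ) (h : θ₀ ≤ θ) : (θ : ℂ) ∈ LTdom μ := fun i j => by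
  simpa using integrable_exp_neg_mul_of_le (hμ i j) (by simpa using hθ₀ i j) h

theorem continuousOn_specRad_lapT (hμ : ∀ i j, ∀ᵐ x ∂μ i j, 0 ≤ x) {θ₀ : ℝ}
    (hθ₀ : (θ₀ : ℂ) ∈ LTdom μ) :
    ContinuousOn (fun θ : ℝ => specRad p (lapT μ θ)) (Set.Ici θ₀) := by
  simp_rw [lapT_ofReal]
  refine continuousOn_specRad_map_ofReal.comp
    (continuousOn_pi.2 fun i => continuousOn_pi.2 fun j => ?_) fun θ _ => realLapT_nonneg θ
  exact continuousOn_integral_exp_neg_mul (hμ i j) (by simpa using hθ₀ i j)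

theorem antitoneOn_specRad_lapT (hμ : ∀ i j, ∀ᵐ x ∂μ i j, 0 ≤ x) {θ₀ : ℝ}
    (hθ₀ : (θ₀ : ℂ) ∈ LTdom μ) :
    AntitoneOn (fun θ : ℝ => specRad p (lapT μ θ)) (Set.Ici θ₀) := fun a ha b hb hab => by
  simp only [lapT_ofReal]
  refine specRad_le_specRad_of_norm_le fun i j => ?_
  rw [Matrix.map_apply, Complex.norm_real, Real.norm_of_nonneg (realLapT_nonneg b i j)]
  exact antitoneOn_integral_exp_neg_mul (hμ i j) (by simpa using hθ₀ i j) ha hb hab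

theorem eventually_specRad_lapT_lt_one (hμ : ∀ i j, ∀ᵐ x ∂μ i j, 0 ≤ x) {θ₀ : ℝ}
    (hθ₀ : (θ₀ : ℂ) ∈ LTdom μ) (hA2 : specRad p (atomMat μ) < 1) :
    ∀ᶠ θ : ℝ in atTop, specRad p (lapT μ θ) < 1 := by
  have hlim : Tendsto (fun θ : ℝ => lapT μ θ) atTop (𝓝 (atomMat μ)) := by
    simp_rw [lapT_ofReal]
    refine ((continuous_id.matrix_map Complex.continuous_ofReal).tendsto
      (Matrix.of fun i j => (μ i j {0}).toReal)).comp
      (tendsto_pi_nhds.2 fun i => tendsto_pi_nhds.2 fun j => ?_)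
    exact tendsto_integral_exp_neg_mul_atTop (hμ i j) (by simpa using hθ₀ i j)
  exact hlim (upperSemicontinuous_specRad _ 1 hA2)

theorem one_le_specRad_lapT_re {z : ℂ} (hz : z ∈ LambdaSet μ) :
    1 ≤ specRad p (lapT μ z.re) := by
  have hone : (1 : ℂ) ∈ spectrum ℂ (lapT μ z) := by
    rw [spectrum.mem_iff, map_one, Matrix.isUnit_iff_isUnit_det, isUnit_iff_ne_zero, not_not]
    exact hz.2
  refine (norm_one (α := ℂ) ▸ norm_le_specRad hone).trans ?_
  rw [lapT_ofReal]
  exact specRad_le_specRad_of_norm_le fun i j => norm_integral_cexp_neg_mul_le z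

theorem det_one_sub_lapT_eq_zero {α : ℝ} (h : specRad p (lapT μ α) = 1) :
    (1 - lapT μ α).det = 0 := by
  rw [lapT_ofReal] at h ⊢
  have hdet := congrArg Complex.ofRealHom (det_one_sub_eq_zero_of_specRad_eq_one
    (realLapT_nonneg α) h)
  rwa [RingHom.map_det, map_sub, map_one, map_zero] at hdet

end MatrixLaplaceTransform

theorem malthusian_parameter_exists_general {p : ℕ} (μ : Fin p → Fin p → Measure ℝ)
    (hsupp : ∀ i j, μ i j (Set.Iio 0) = 0)
    (hA2 : specRad p (atomMat μ) < 1)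
    (hA3 : ∃ θ : ℝ, (θ : ℂ) ∈ LTdom μ ∧ 1 ≤ specRad p (lapT μ θ)) :
    ∃ α : ℝ, (α : ℂ) ∈ LambdaSet μ ∧ specRad p (lapT μ α) = 1 ∧
      ∀ z ∈ LambdaSet μ, z.re ≤ α := by
  obtain ⟨θ₀, hθ₀, hρθ₀⟩ := hA3
  have hμ : ∀ i j, ∀ᵐ x ∂μ i j, 0 ≤ x := fun i j =>
    ae_iff.2 (measure_mono_null (fun _ => not_le.1) (hsupp i j))
  obtain ⟨b, hb, hθ₀b⟩ :=
    ((eventually_specRad_lapT_lt_one hμ hθ₀ hA2).and (eventually_ge_atTop θ₀)).exists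
  obtain ⟨α, hα, ⟨hθ₀α, -⟩, hαmax⟩ := exists_eq_and_isGreatest_of_antitoneOn
    (continuousOn_specRad_lapT hμ hθ₀) (antitoneOn_specRad_lapT hμ hθ₀) hρθ₀ hθ₀b hb
  refine ⟨α, ⟨ofReal_mem_LTdom_of_le hμ hθ₀ hθ₀α, det_one_sub_lapT_eq_zero hα⟩, hα,
    fun z hz => ?_⟩
  rcases le_total z.re θ₀ with h | h
  · exact h.trans hθ₀α
  · exact hαmax ⟨h, one_le_specRad_lapT_re hz⟩

/-- Under (A1), (A2) and (A3), there exists a Malthusian parameter, i.e.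
a real `α ∈ Λ` with `ρ(Lμ(α)) = 1`, and every `λ ∈ Λ` satisfies `Re(λ) ≤ α`. -/
theorem malthusian_parameter_exists {p : ℕ} (μ : Fin p → Fin p → Measure ℝ)
    (hloc : ∀ i j, IsLocallyFiniteMeasure (μ i j))
    (hsupp : ∀ i j, μ i j (Set.Iio 0) = 0)
    (hA1 : ∃ ϑ : ℝ, (ϑ : ℂ) ∈ interior (LTdom μ))
    (hA2 : specRad p (atomMat μ) < 1)
    (hA3 : ∃ θ : ℝ, (θ : ℂ) ∈ LTdom μ ∧ 1 ≤ specRad p (lapT μ θ)) :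
    ∃ α : ℝ, (α : ℂ) ∈ LambdaSet μ ∧ specRad p (lapT μ α) = 1 ∧
      ∀ z ∈ LambdaSet μ, z.re ≤ α :=
  malthusian_parameter_exists_general μ hsupp hA2 hA3
end
end

section
/- Let μ be a p×p matrix of locally finite measures on [0,∞) satisfying (A1) and (A2). If there exists m ∈ ℕ with ‖L(μ^{*m})_s(ϑ)‖ < 1, where ν_s denotes the singular part of ν with respect to Lebesgue measure taken entrywise, then limsup_{η→±∞} ‖Lμ(ϑ+iη)^m‖ < 1. -/
open MeasureTheory Filter Topology

noncomputable section

attribute [local instance] Matrix.linftyOpNormedRing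

/-- The Laplace transform at `θ` of the singular part (w.r.t. Lebesgue measure) of the
`m`-fold convolution power: `L(μ^{*m})_s(θ)`. -/
def lapTsing {p : ℕ} (μ : Fin p → Fin p → Measure ℝ) (m : ℕ) (θ : ℝ) :
    Matrix (Fin p) (Fin p) ℂ :=
  Matrix.of fun i j =>
    ∫ x, Complex.exp (-(θ : ℂ) * x) ∂((mconvPow μ m i j).singularPart volume)

/-! Write `μ^{*m} = σ + ρ` with `σ` singular and `ρ` absolutely continuous. Since
`L(μ^{*m}) = (Lμ)^m`, on the line `Re z = ϑ` each entry of `Lσ(z)` is bounded in modulus by the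
corresponding entry of `Lσ(ϑ)`, and the `ℓ^∞` operator norm is monotone in the moduli of the
entries, so `‖Lσ(z)‖ ≤ ‖Lσ(ϑ)‖ < 1`. The entries of `Lρ(ϑ + iη)` are Fourier transforms of
`L¹` densities and tend to `0` by Riemann–Lebesgue. The positive integrable weight `e^{-ϑx}`
makes every measure involved σ-finite, which the convolutions and Radon–Nikodym derivatives need.
-/

open Complex

theorem sigmaFinite_of_integrable_of_pos {α : Type*} [MeasurableSpace α] {ν : Measure α}
    {f : α → ℝ} (hf : Integrable f ν) (hpos : ∀ x, 0 < f x) : SigmaFinite ν := by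
  have : IsFiniteMeasure (ν.withDensity fun x => ENNReal.ofReal (f x)) :=
    isFiniteMeasure_withDensity_ofReal hf.2
  rw [← withDensity_inv_same₀ hf.1.aemeasurable.ennreal_ofReal
    (ae_of_all _ fun x => ENNReal.ofReal_pos.2 (hpos x) |>.ne')
    (ae_of_all _ fun _ => ENNReal.ofReal_ne_top)]
  exact SigmaFinite.withDensity_of_ne_top
    (ae_of_all _ fun x => ENNReal.inv_ne_top.2 (ENNReal.ofReal_pos.2 (hpos x)).ne')

section LinftyOpNorm

attribute [local instance] Matrix.linftyOpSeminormedAddCommGroup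

theorem Matrix.linfty_opNorm_le_of_norm_apply_le {m n α β : Type*} [Fintype m] [Fintype n]
    [SeminormedAddCommGroup α] [SeminormedAddCommGroup β] {A : Matrix m n α}
    {B : Matrix m n β} (h : ∀ i j, ‖A i j‖ ≤ ‖B i j‖) : ‖A‖ ≤ ‖B‖ := by
  rw [Matrix.linfty_opNorm_def, Matrix.linfty_opNorm_def, NNReal.coe_le_coe]
  exact Finset.sup_mono_fun fun i _ => Finset.sum_le_sum fun j _ => h i j

end LinftyOpNorm

theorem sigmaFinite_of_integrable_exp {ϑ : ℝ} {ν : Measure ℝ}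
    (h : Integrable (fun x => Real.exp (-ϑ * x)) ν) : SigmaFinite ν :=
  sigmaFinite_of_integrable_of_pos h fun _ => Real.exp_pos _

theorem norm_cexp_neg_mul_ofReal (z : ℂ) (x : ℝ) : ‖cexp (-z * x)‖ = Real.exp (-z.re * x) := by
  rw [Complex.norm_exp]
  simp [Complex.mul_re]

theorem integrable_cexp_neg_mul {ν : Measure ℝ} {z : ℂ}
    (h : Integrable (fun x => Real.exp (-z.re * x)) ν) :
    Integrable (fun x : ℝ => cexp (-z * x)) ν :=
  h.mono' (by fun_prop) (ae_of_all _ fun x => (norm_cexp_neg_mul_ofReal z x).le)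

theorem integrable_exp_conv {ϑ : ℝ} {α β : Measure ℝ}
    (hα : Integrable (fun x => Real.exp (-ϑ * x)) α)
    (hβ : Integrable (fun x => Real.exp (-ϑ * x)) β) :
    Integrable (fun x => Real.exp (-ϑ * x)) (α.conv β) := by
  have := sigmaFinite_of_integrable_exp hα
  have := sigmaFinite_of_integrable_exp hβ
  rw [Measure.conv, integrable_map_measure (by fun_prop) (by fun_prop)]
  convert hα.mul_prod hβ using 2 with q
  simp only [Function.comp_apply, ← Real.exp_add]
  ring_nf

theorem integral_cexp_conv {α β : Measure ℝ} {z : ℂ}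
    (hα : Integrable (fun x => Real.exp (-z.re * x)) α)
    (hβ : Integrable (fun x => Real.exp (-z.re * x)) β) :
    ∫ x, cexp (-z * x) ∂(α.conv β) = (∫ x, cexp (-z * x) ∂α) * ∫ x, cexp (-z * x) ∂β := by
  have := sigmaFinite_of_integrable_exp hα
  have := sigmaFinite_of_integrable_exp hβ
  rw [Measure.conv, integral_map (by fun_prop) (by fun_prop), ← integral_prod_mul]
  congr 1 with q
  rw [← Complex.exp_add]
  push_cast
  ring_nf

theorem tendsto_integral_cexp_of_absolutelyContinuous {ϑ : ℝ} {ρ : Measure ℝ}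
    (hac : ρ ≪ volume) (hρ : Integrable (fun x => Real.exp (-ϑ * x)) ρ) :
    Tendsto (fun η : ℝ => ∫ x, cexp (-(ϑ + η * I) * x) ∂ρ) (cocompact ℝ) (𝓝 0) := by
  have := sigmaFinite_of_integrable_exp hρ
  set g : ℝ → ℂ := fun x => (ρ.rnDeriv volume x).toReal • cexp (-ϑ * x)
  have hfourier (η : ℝ) : ∫ x, cexp (-(ϑ + η * I) * x) ∂ρ
      = ∫ x, Real.fourierChar (-(x * (η * (2 * Real.pi)⁻¹))) • g x := by
    rw [← integral_rnDeriv_smul hac]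
    refine integral_congr_ae (ae_of_all _ fun x => ?_)
    simp only [g, Circle.smul_def, Real.fourierChar_apply, smul_eq_mul, Complex.real_smul]
    rw [mul_left_comm, ← Complex.exp_add]
    congr 2
    push_cast
    field_simp
    ring
  have hlin : Tendsto (fun η : ℝ => η * (2 * Real.pi)⁻¹) (cocompact ℝ) (cocompact ℝ) :=
    tendsto_cocompact_mul_right₀ (inv_ne_zero (by positivity))
  simp_rw [hfourier]
  exact (Real.tendsto_integral_exp_smul_cocompact g).comp hlin

section MatrixLaplace

variable {p : ℕ}

theorem integrable_exp_mconvPow {ϑ : ℝ} {μ : Fin p → Fin p → Measure ℝ}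
    (hμ : ∀ i j, Integrable (fun x => Real.exp (-ϑ * x)) (μ i j)) (n : ℕ) (i j : Fin p) :
    Integrable (fun x => Real.exp (-ϑ * x)) (mconvPow μ n i j) := by
  induction n generalizing i j with
  | zero =>
    by_cases h : i = j
    · simpa [mconvPow, h] using integrable_dirac enorm_lt_top
    · simp [mconvPow, h]
  | succ n ih =>
    exact integrable_finsetSum_measure.2 fun k _ => integrable_exp_conv (hμ i k) (ih k j)

theorem lapT_mconvPow {z : ℂ} {μ : Fin p → Fin p → Measure ℝ}
    (hμ : ∀ i j, Integrable (fun x => Real.exp (-z.re * x)) (μ i j)) (n : ℕ) :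
    lapT (mconvPow μ n) z = lapT μ z ^ n := by
  induction n with
  | zero =>
    ext i j
    by_cases h : i = j <;> simp [lapT, mconvPow, h]
  | succ n ih =>
    ext i j
    have hconv k := integrable_exp_conv (hμ i k) (integrable_exp_mconvPow hμ n k j)
    rw [pow_succ', Matrix.mul_apply, ← ih]
    simp only [lapT, mconvPow, mconv, Matrix.of_apply]
    rw [integral_finsetSum_measure fun k _ => integrable_cexp_neg_mul (hconv k)]
    exact Finset.sum_congr rfl fun k _ =>
      integral_cexp_conv (hμ i k) (integrable_exp_mconvPow hμ n k j)

theorem lapT_add {z : ℂ} {ν ν' : Fin p → Fin p → Measure ℝ}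
    (hν : ∀ i j, Integrable (fun x => Real.exp (-z.re * x)) (ν i j))
    (hν' : ∀ i j, Integrable (fun x => Real.exp (-z.re * x)) (ν' i j)) :
    lapT (ν + ν') z = lapT ν z + lapT ν' z := by
  ext i j
  exact integral_add_measure (integrable_cexp_neg_mul (hν i j))
    (integrable_cexp_neg_mul (hν' i j))

theorem norm_lapT_le_norm_lapT_re (ν : Fin p → Fin p → Measure ℝ) (z : ℂ) :
    ‖lapT ν z‖ ≤ ‖lapT ν z.re‖ := by
  refine Matrix.linfty_opNorm_le_of_norm_apply_le fun i j => ?_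
  have hre : lapT ν z.re i j = ((∫ x, Real.exp (-z.re * x) ∂(ν i j) : ℝ) : ℂ) := by
    rw [lapT, Matrix.of_apply, ← integral_complex_ofReal]
    refine integral_congr_ae (ae_of_all _ fun x => ?_)
    push_cast
    rfl
  calc ‖lapT ν z i j‖ ≤ ∫ x, ‖cexp (-z * x)‖ ∂(ν i j) := norm_integral_le_integral_norm _
    _ = ∫ x, Real.exp (-z.re * x) ∂(ν i j) := by simp_rw [norm_cexp_neg_mul_ofReal]
    _ ≤ ‖lapT ν z.re i j‖ := by rw [hre, Complex.norm_real]; exact Real.le_norm_self _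

theorem tendsto_lapT_of_absolutelyContinuous {ϑ : ℝ} {ν : Fin p → Fin p → Measure ℝ}
    (hac : ∀ i j, ν i j ≪ volume)
    (hν : ∀ i j, Integrable (fun x => Real.exp (-ϑ * x)) (ν i j)) :
    Tendsto (fun η : ℝ => lapT ν (ϑ + η * I)) (cocompact ℝ) (𝓝 0) :=
  tendsto_pi_nhds.2 fun i => tendsto_pi_nhds.2 fun j =>
    tendsto_integral_cexp_of_absolutelyContinuous (hac i j) (hν i j)

end MatrixLaplace

theorem singular_norm_implies_limsup_general {p : ℕ} (μ : Fin p → Fin p → Measure ℝ)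
    (ϑ : ℝ) (hA1 : (ϑ : ℂ) ∈ interior (LTdom μ))
    (m : ℕ)
    (hB : ‖lapTsing μ m ϑ‖ < 1) :
    ∃ c : ℝ, c < 1 ∧ ∀ᶠ η : ℝ in (atBot ⊔ atTop),
      ‖(lapT μ (ϑ + η * Complex.I)) ^ m‖ ≤ c := by
  have hμ : ∀ i j, Integrable (fun x => Real.exp (-ϑ * x)) (μ i j) := by
    simpa [LTdom] using interior_subset hA1
  have hμm := integrable_exp_mconvPow hμ m
  have := fun i j => sigmaFinite_of_integrable_exp (hμm i j)
  set σ : Fin p → Fin p → Measure ℝ := fun i j => (mconvPow μ m i j).singularPart volume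
  set ρ : Fin p → Fin p → Measure ℝ :=
    fun i j => volume.withDensity ((mconvPow μ m i j).rnDeriv volume)
  have hdecomp : mconvPow μ m = σ + ρ := by
    ext1 i; ext1 j; exact Measure.haveLebesgueDecomposition_add _ _
  have hσ : ∀ i j, Integrable (fun x => Real.exp (-ϑ * x)) (σ i j) := fun i j =>
    (hμm i j).mono_measure (Measure.singularPart_le _ _)
  have hρ : ∀ i j, Integrable (fun x => Real.exp (-ϑ * x)) (ρ i j) := fun i j =>
    (hμm i j).mono_measure (Measure.withDensity_rnDeriv_le _ _)
  have hρlim : Tendsto (fun η : ℝ => ‖lapT ρ (ϑ + η * I)‖) (cocompact ℝ) (𝓝 0) := by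
    simpa using (tendsto_lapT_of_absolutelyContinuous
      (fun i j => withDensity_absolutelyContinuous _ _) hρ).norm
  obtain ⟨c, hsing_lt, hc⟩ := exists_between hB
  refine ⟨c, hc, ?_⟩
  rw [← cocompact_eq_atBot_atTop]
  filter_upwards [hρlim.eventually (gt_mem_nhds (sub_pos.2 hsing_lt))] with η hη
  set z : ℂ := ϑ + η * I
  have hre : z.re = ϑ := by simp [z]
  have hsing : lapT σ ϑ = lapTsing μ m ϑ := rfl
  calc ‖lapT μ z ^ m‖ = ‖lapT σ z + lapT ρ z‖ := by
        rw [← lapT_mconvPow (by simpa [hre] using hμ), hdecomp,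
          lapT_add (by simpa [hre] using hσ) (by simpa [hre] using hρ)]
    _ ≤ ‖lapTsing μ m ϑ‖ + ‖lapT ρ z‖ := by
        grw [norm_add_le, norm_lapT_le_norm_lapT_re, hre, hsing]
    _ ≤ c := by linarith

/-- **Lemma 2.9, (B) ⟹ (C).** Under (A1) and (A2), if
`‖L(μ^{*m})_s(ϑ)‖ < 1` for some `m ≥ 1`, then
`limsup_{η→±∞} ‖Lμ(ϑ+iη)^m‖ < 1`, i.e. `‖Lμ(ϑ+iη)^m‖ ≤ c < 1` for `|η|` large. -/
theorem singular_norm_implies_limsup {p : ℕ} (μ : Fin p → Fin p → Measure ℝ)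
    (hloc : ∀ i j, IsLocallyFiniteMeasure (μ i j))
    (hsupp : ∀ i j, μ i j (Set.Iio 0) = 0)
    (ϑ : ℝ) (hA1 : (ϑ : ℂ) ∈ interior (LTdom μ))
    (hA2 : specRad p (atomMat μ) < 1)
    (m : ℕ) (hm : 0 < m)
    (hB : ‖lapTsing μ m ϑ‖ < 1) :
    ∃ c : ℝ, c < 1 ∧ ∀ᶠ η : ℝ in (atBot ⊔ atTop),
      ‖(lapT μ (ϑ + η * Complex.I)) ^ m‖ ≤ c :=
  singular_norm_implies_limsup_general μ ϑ hA1 m hB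
end
end
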